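/- arXiv:2408.04986 — 5 statements merged into one kernel-verified Lean document; each statement's English description precedes it below -/
import Mathlib

section
/- Let (u_n) be defined by u_0 = P, u_1 = Q, u_n = A u_{n-1} − B u_{n-2}, with B ≠ 0, P ≠ 0, Q ≠ 0, and suppose u_k = 0 for some k ≥ 2 with U_{k-1} ≠ 0 (where U is the first-kind Lucas sequence for A, B). Then P · B · U_{k−1} = Q · U_k, i.e. P/Q = U_k/(B U_{k−1}). -/
/-!
The sequences `n ↦ u (n + 1)`, `n ↦ U (n + 1)` and `n ↦ U n` all satisfy the recurrence, and
`u (n + 1) = Q U (n + 1) - B P U n` holds for `n = 0, 1`, hence for every `n`.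
At `n = k - 1` the left side vanishes.
-/

theorem succ_eq_lucasU_combination {R : Type*} [CommRing R] {A B : R} {u U : ℕ → R}
    (hrec : ∀ n, u (n + 2) = A * u (n + 1) - B * u n)
    (hU0 : U 0 = 0) (hU1 : U 1 = 1) (hUrec : ∀ m, U (m + 2) = A * U (m + 1) - B * U m) (n : ℕ) :
    u (n + 1) = u 1 * U (n + 1) - B * u 0 * U n := by
  induction n using Nat.twoStepInduction with
  | zero => simp [hU0, hU1]
  | one => rw [hrec 0, hUrec 0, hU0, hU1]; ring
  | more n ih₀ ih₁ =>
    rw [hrec (n + 1), hUrec (n + 1), ih₀, ih₁]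
    linear_combination B * u 0 * hUrec n

theorem brig_zero_determines_ratio_general
    (A B P Q : ℤ) (u U : ℕ → ℤ) (k : ℕ)
    (hu0 : u 0 = P) (hu1 : u 1 = Q)
    (hrec : ∀ n : ℕ, u (n + 2) = A * u (n + 1) - B * u n)
    (hU0 : U 0 = 0) (hU1 : U 1 = 1)
    (hUrec : ∀ m : ℕ, U (m + 2) = A * U (m + 1) - B * U m)
    (hk : 2 ≤ k) (huk : u k = 0) :
    P * (B * U (k - 1)) = Q * U k := by
  obtain ⟨m, rfl⟩ : ∃ m, k = m + 1 := ⟨k - 1, by omega⟩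
  have h := succ_eq_lucasU_combination hrec hU0 hU1 hUrec m
  rw [huk, hu0, hu1] at h
  rw [Nat.add_sub_cancel]
  linear_combination h

/-- If a BRIG sequence with nonzero initial values has u_k = 0, then P/Q = U_k/(B U_{k-1}). -/
theorem brig_zero_determines_ratio
    (A B P Q : ℤ) (u U : ℕ → ℤ) (k : ℕ)
    (hB : B ≠ 0) (hP : P ≠ 0) (hQ : Q ≠ 0)
    (hu0 : u 0 = P) (hu1 : u 1 = Q)
    (hrec : ∀ n : ℕ, u (n + 2) = A * u (n + 1) - B * u n)
    (hU0 : U 0 = 0) (hU1 : U 1 = 1)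
    (hUrec : ∀ m : ℕ, U (m + 2) = A * U (m + 1) - B * U m)
    (hk : 2 ≤ k) (huk : u k = 0) (hUk1 : U (k - 1) ≠ 0) :
    P * (B * U (k - 1)) = Q * U k :=
  brig_zero_determines_ratio_general A B P Q u U k hu0 hu1 hrec hU0 hU1 hUrec hk huk
end

section
/- Let p be a prime with v_p(A) ≥ v_p(B) = 1 (where v_p denotes p-adic valuation) and let (U_m) be the Lucas sequence of the first kind for A, B. Then for all n ≥ 0: v_p(U_{2n+1}) = n and v_p(U_{2n}) ≥ n. -/
/-!
Since `p ∣ A` and `p ∣ B`, the recurrence `U (m + 2) = A U (m + 1) - B U m` gains a factor of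
`p` every two steps, and modulo the next power of `p` the term `A U (2n + 2)` drops out of
`U (2n + 3)`. This gives `p ^ n ∣ U (2n)` and `U (2n + 1) ≡ (-B) ^ n [mod p ^ (n + 1)]`;
as `v_p((-B) ^ n) = n`, the valuation of `U (2n + 1)` is exactly `n`.
-/

section LucasSequence

variable {R : Type*} [CommRing R] {A B p : R} {U : ℕ → R}

theorem lucas_pow_dvd_even_and_odd_sub_neg_pow (hpA : p ∣ A) (hpB : p ∣ B)
    (hU0 : U 0 = 0) (hU1 : U 1 = 1) (hUrec : ∀ m : ℕ, U (m + 2) = A * U (m + 1) - B * U m)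
    (n : ℕ) : p ^ n ∣ U (2 * n) ∧ p ^ (n + 1) ∣ U (2 * n + 1) - (-B) ^ n := by
  induction n with
  | zero => simp [hU0, hU1]
  | succ n ih =>
    obtain ⟨hEven, hOdd⟩ := ih
    have hOdd' : p ^ n ∣ U (2 * n + 1) := by
      simpa using dvd_add ((pow_dvd_pow p n.le_succ).trans hOdd)
        (pow_dvd_pow_of_dvd (dvd_neg.mpr hpB) n)
    have hEven' : p ^ (n + 1) ∣ U (2 * (n + 1)) := by
      rw [show 2 * (n + 1) = 2 * n + 2 by ring, hUrec, pow_succ']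
      exact dvd_sub (mul_dvd_mul hpA hOdd') (mul_dvd_mul hpB hEven)
    refine ⟨hEven', ?_⟩
    have hStep : U (2 * (n + 1) + 1) - (-B) ^ (n + 1)
        = A * U (2 * (n + 1)) - B * (U (2 * n + 1) - (-B) ^ n) := by
      rw [show 2 * (n + 1) + 1 = 2 * n + 1 + 2 by ring, hUrec, pow_succ]
      ring_nf
    rw [hStep, pow_succ' p (n + 1)]
    exact dvd_sub (mul_dvd_mul hpA hEven') (mul_dvd_mul hpB hOdd)

theorem emultiplicity_lucas_odd [IsDomain R] (hp : Prime p) (hpA : p ∣ A)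
    (hB : emultiplicity p B = 1) (hU0 : U 0 = 0) (hU1 : U 1 = 1)
    (hUrec : ∀ m : ℕ, U (m + 2) = A * U (m + 1) - B * U m) (n : ℕ) :
    emultiplicity p (U (2 * n + 1)) = n := by
  have hpB : p ∣ B := by simpa using pow_dvd_of_le_emultiplicity (k := 1) (by simp [hB])
  have hPow : emultiplicity p ((-B) ^ n) = n := by
    rw [emultiplicity_pow hp, emultiplicity_neg, hB, mul_one]
  have hRest : (n : ℕ∞) < emultiplicity p (U (2 * n + 1) - (-B) ^ n) :=
    (ENat.natCast_lt_natCast.mpr n.lt_succ_self).trans_le <| le_emultiplicity_of_pow_dvd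
      (lucas_pow_dvd_even_and_odd_sub_neg_pow hpA hpB hU0 hU1 hUrec n).2
  rw [← sub_add_cancel (U (2 * n + 1)) ((-B) ^ n), emultiplicity_add_of_gt (hPow ▸ hRest), hPow]

end LucasSequence

/-- If v_p(A) ≥ v_p(B) = 1, then v_p(U_{2n+1}) = n and v_p(U_{2n}) ≥ n. -/
theorem lucas_padic_valuation
    (A B : ℤ) (p : ℕ) (hp : p.Prime)
    (hpA : (p : ℤ) ∣ A) (hpB : (p : ℤ) ∣ B) (hp2B : ¬ (p : ℤ) ^ 2 ∣ B)
    (U : ℕ → ℤ)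
    (hU0 : U 0 = 0) (hU1 : U 1 = 1)
    (hUrec : ∀ m : ℕ, U (m + 2) = A * U (m + 1) - B * U m) :
    ∀ n : ℕ,
      ((p : ℤ) ^ n ∣ U (2 * n + 1) ∧ ¬ (p : ℤ) ^ (n + 1) ∣ U (2 * n + 1))
      ∧ (p : ℤ) ^ n ∣ U (2 * n) := by
  intro n
  have hB : emultiplicity (p : ℤ) B = 1 := by
    exact_mod_cast emultiplicity_eq_coe.mpr ⟨by simpa using hpB, hp2B⟩
  exact ⟨emultiplicity_eq_coe.mp
      (emultiplicity_lucas_odd (Nat.prime_iff_prime_int.mp hp) hpA hB hU0 hU1 hUrec n),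
    (lucas_pow_dvd_even_and_odd_sub_neg_pow hpA hpB hU0 hU1 hUrec n).1⟩
end

section
/- Let A, B be integers such that no prime p satisfies p ∣ A and p² ∣ B simultaneously (i.e. the pair (A,B) is 'reduced'), and let g = gcd(A, B). Let (U_m) be the Lucas sequence of the first kind for A, B. Then for all n ≥ 0, gcd(U_{2n}, U_{2n+1}) = g^n and gcd(U_{2n+1}, U_{2n+2}) = g^n. -/
/-!
Write `A = g a` and `B = g b`. Reducedness says exactly that `A` is coprime to `b`: a prime
dividing both divides `g`, hence its square divides `g b = B`. Two steps of the recurrence give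
`U (2n) = g^n x_n`, `U (2n+1) = g^n y_n` with `x_{n+1} = a y_n - b x_n` and
`y_{n+1} = A x_{n+1} - b y_n`, and `U (2n+2) = g^(n+1) x_{n+1}`. By induction `x_n, y_n` are
coprime and `y_n` is coprime to `g` and to `b`; so the common factor of consecutive terms is
exactly `g^n`.
-/

section ScaledLucas

variable {R : Type*} [CommRing R]

/-- The pair `(U (2n) / g^n, U (2n+1) / g^n)` for the Lucas sequence with parameters
`(g * a, g * b)`. -/
def scaledLucas (g a b : R) : ℕ → R × R
  | 0 => (0, 1)
  | n + 1 =>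
    let p := scaledLucas g a b n
    (a * p.2 - b * p.1, g * a * (a * p.2 - b * p.1) - b * p.2)

variable {g a b : R}

@[simp]
lemma scaledLucas_zero : scaledLucas g a b 0 = (0, 1) := rfl

lemma scaledLucas_succ_fst (n : ℕ) :
    (scaledLucas g a b (n + 1)).1 =
      a * (scaledLucas g a b n).2 - b * (scaledLucas g a b n).1 := rfl

lemma scaledLucas_succ_snd (n : ℕ) :
    (scaledLucas g a b (n + 1)).2 =
      g * a * (scaledLucas g a b (n + 1)).1 - b * (scaledLucas g a b n).2 := rfl

lemma lucas_eq_pow_mul_scaledLucas {U : ℕ → R} (hU0 : U 0 = 0) (hU1 : U 1 = 1)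
    (hUrec : ∀ m, U (m + 2) = g * a * U (m + 1) - g * b * U m) (n : ℕ) :
    U (2 * n) = g ^ n * (scaledLucas g a b n).1 ∧
      U (2 * n + 1) = g ^ n * (scaledLucas g a b n).2 := by
  induction n with
  | zero => simp [hU0, hU1]
  | succ n ih =>
    have heven : U (2 * (n + 1)) = U (2 * n + 2) := rfl
    have hodd : U (2 * (n + 1) + 1) = U (2 * n + 1 + 2) := rfl
    rw [heven, hodd, hUrec, hUrec, hUrec, ih.1, ih.2, scaledLucas_succ_snd,
      scaledLucas_succ_fst]
    constructor <;> ring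

lemma isCoprime_scaledLucas_succ_fst_snd {n : ℕ}
    (hxy : IsCoprime (scaledLucas g a b n).1 (scaledLucas g a b n).2)
    (hyb : IsCoprime (scaledLucas g a b n).2 b) :
    IsCoprime (scaledLucas g a b (n + 1)).1 (scaledLucas g a b n).2 := by
  convert (hyb.symm.mul_left hxy).neg_left.add_mul_right_left a using 1
  rw [scaledLucas_succ_fst]; ring

lemma scaledLucas_isCoprime (hAb : IsCoprime (g * a) b) (n : ℕ) :
    IsCoprime (scaledLucas g a b n).1 (scaledLucas g a b n).2 ∧
      IsCoprime (scaledLucas g a b n).2 g ∧ IsCoprime (scaledLucas g a b n).2 b := by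
  induction n with
  | zero => simp [isCoprime_one_left, isCoprime_one_right]
  | succ n ih =>
    obtain ⟨hxy, hyg, hyb⟩ := ih
    set x := (scaledLucas g a b n).1
    set y := (scaledLucas g a b n).2
    set x' := (scaledLucas g a b (n + 1)).1
    have hx' : x' = a * y - b * x := scaledLucas_succ_fst n
    have hy' : (scaledLucas g a b (n + 1)).2 = g * a * x' - b * y := scaledLucas_succ_snd n
    have hgb : IsCoprime g b := hAb.of_mul_left_left
    -- `x' ≡ a y (mod b)`; `y' ≡ -b y` modulo `x'` and modulo `g`; `y' ≡ g a x' (mod b)`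
    have hx'b : IsCoprime x' b := by
      convert (hAb.of_mul_left_right.mul_left hyb).add_mul_right_left (-x) using 1
      rw [hx']; ring
    have hx'y : IsCoprime x' y := isCoprime_scaledLucas_succ_fst_snd hxy hyb
    rw [hy']
    refine ⟨?_, ?_, ?_⟩
    · convert (hx'b.mul_right hx'y).neg_right.add_mul_right_right (g * a) using 1
      ring
    · convert (hgb.symm.mul_left hyg).neg_left.add_mul_left_left (a * x') using 1
      ring
    · convert (hAb.mul_left hx'b).add_mul_left_left (-y) using 1
      ring

end ScaledLucas

lemma Int.gcd_mul_left_of_isCoprime {x y : ℤ} (h : IsCoprime x y) (c : ℤ) :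
    Int.gcd (c * x) (c * y) = c.natAbs := by
  rw [Int.gcd_mul_left, Int.isCoprime_iff_gcd_eq_one.mp h, mul_one]

lemma Int.isCoprime_div_gcd_of_reduced {A B b : ℤ}
    (hred : ∀ q : ℕ, q.Prime → (q : ℤ) ∣ A → ¬ (q : ℤ) ^ 2 ∣ B)
    (hB : B = Int.gcd A B * b) : IsCoprime A b := by
  rw [Int.isCoprime_iff_gcd_eq_one]
  refine Nat.coprime_of_dvd fun q hq hqA hqb => hred q hq (Int.natCast_dvd.mpr hqA) ?_
  rw [← Int.natCast_dvd] at hqA hqb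
  have hqg : (q : ℤ) ∣ Int.gcd A B := Int.natCast_dvd_natCast.mpr <|
    Int.dvd_gcd hqA (hB ▸ hqb.mul_left _)
  rw [hB, sq]
  exact mul_dvd_mul hqg hqb

theorem lucas_consecutive_gcd_general
    (A B : ℤ)
    (hred : ∀ q : ℕ, q.Prime → (q : ℤ) ∣ A → ¬ (q : ℤ) ^ 2 ∣ B)
    (U : ℕ → ℤ)
    (hU0 : U 0 = 0) (hU1 : U 1 = 1)
    (hUrec : ∀ m : ℕ, U (m + 2) = A * U (m + 1) - B * U m) :
    ∀ n : ℕ,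
      Int.gcd (U (2 * n)) (U (2 * n + 1)) = (Int.gcd A B) ^ n
      ∧ Int.gcd (U (2 * n + 1)) (U (2 * n + 2)) = (Int.gcd A B) ^ n := by
  intro n
  set g : ℤ := (Int.gcd A B : ℤ)
  obtain ⟨a, hA⟩ : g ∣ A := Int.gcd_dvd_left A B
  obtain ⟨b, hB⟩ : g ∣ B := Int.gcd_dvd_right A B
  have hAb : IsCoprime (g * a) b := hA ▸ Int.isCoprime_div_gcd_of_reduced hred hB
  have hUrec' : ∀ m, U (m + 2) = g * a * U (m + 1) - g * b * U m := by
    simpa only [hA, hB] using hUrec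
  obtain ⟨hUeven, hUodd⟩ := lucas_eq_pow_mul_scaledLucas hU0 hU1 hUrec' n
  have hUnext : U (2 * n + 2) = g ^ n * (g * (scaledLucas g a b (n + 1)).1) := by
    rw [← mul_assoc, ← pow_succ]
    exact (lucas_eq_pow_mul_scaledLucas hU0 hU1 hUrec' (n + 1)).1
  obtain ⟨hxy, hyg, hyb⟩ := scaledLucas_isCoprime hAb n
  have hyx' := (isCoprime_scaledLucas_succ_fst_snd hxy hyb).symm
  rw [hUeven, hUodd, hUnext, Int.gcd_mul_left_of_isCoprime hxy,
    Int.gcd_mul_left_of_isCoprime (hyg.mul_right hyx')]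
  simp [g, Int.natAbs_pow]

/-- If no prime p satisfies p ∣ A and p² ∣ B, then consecutive Lucas terms have
gcd(U_{2n}, U_{2n+1}) = gcd(U_{2n+1}, U_{2n+2}) = g^n where g = gcd(A,B). -/
theorem lucas_consecutive_gcd
    (A B : ℤ)
    (hred : ∀ q : ℕ, q.Prime → (q : ℤ) ∣ A → ¬ (q : ℤ) ^ 2 ∣ B)
    (U : ℕ → ℤ)
    (hU0 : U 0 = 0) (hU1 : U 1 = 1)
    (hUrec : ∀ m : ℕ, U (m + 2) = A * U (m + 1) - B * U m)
    (hnz : ∀ m : ℕ, 1 ≤ m → U m ≠ 0) :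
    ∀ n : ℕ,
      Int.gcd (U (2 * n)) (U (2 * n + 1)) = (Int.gcd A B) ^ n
      ∧ Int.gcd (U (2 * n + 1)) (U (2 * n + 2)) = (Int.gcd A B) ^ n :=
  lucas_consecutive_gcd_general A B hred U hU0 hU1 hUrec
end

section
/- For integers A, B, define P_2 = A, Q_2 = B, and recursively P_{m+1} = A P_m − Q_m, Q_{m+1} = B P_m for m ≥ 2. Then for each m ≥ 2, the sequence (u_n) with u_0 = P_m, u_1 = Q_m and u_n = A u_{n-1} − B u_{n-2} satisfies u_m = 0. -/
/-!
Each sequence `u (m + 1)` is, after dropping its first term, `B` times the sequence `u m`: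
both sides solve the same second-order recurrence, and the recursion defining `P` and `Q` is
exactly what makes them agree at `n = 0, 1`. Hence `u (m + 1) (m + 1) = B * u m m`, and the
claim follows by induction from `u 2 2 = A * B - B * A = 0`.
-/

namespace LinearRecurrence

variable {R : Type*} [CommSemiring R] (E : LinearRecurrence R)

theorem IsSolution.comp_succ {u : ℕ → R} (hu : E.IsSolution u) :
    E.IsSolution fun n ↦ u (n + 1) := fun n ↦ by
  simpa only [add_right_comm] using hu (n + 1)

theorem IsSolution.const_mul {u : ℕ → R} (hu : E.IsSolution u) (c : R) :
    E.IsSolution fun n ↦ c * u n :=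
  E.solSpace.smul_mem c hu

theorem forall_succ_eq_mul_of_lt_order {v w : ℕ → R} (hv : E.IsSolution v)
    (hw : E.IsSolution w) (c : R) (h : ∀ n < E.order, w (n + 1) = c * v n) (n : ℕ) :
    w (n + 1) = c * v n := by
  have hsol := (E.eq_iff_eqOn_range_order _ _ hw.comp_succ (hv.const_mul E c)).mpr
    fun k hk ↦ h k (Finset.mem_range.mp hk)
  exact congrFun hsol n

end LinearRecurrence

def lucasRecurrence {R : Type*} [CommRing R] (A B : R) : LinearRecurrence R :=
  ⟨2, ![-B, A]⟩

theorem lucasRecurrence_isSolution_iff {R : Type*} [CommRing R] (A B : R) (u : ℕ → R) :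
    (lucasRecurrence A B).IsSolution u ↔ ∀ n, u (n + 2) = A * u (n + 1) - B * u n := by
  refine forall_congr' fun n ↦ ?_
  change u (n + 2) = ∑ i : Fin 2, ![-B, A] i * u (n + i) ↔ _
  rw [Fin.sum_univ_two, Matrix.cons_val_zero, Matrix.cons_val_one, Matrix.cons_val_zero,
    Fin.val_zero, Fin.val_one, add_zero, neg_mul, neg_add_eq_sub]

/-- Initial values P_m, Q_m defined by P_2 = A, Q_2 = B, P_{m+1} = A P_m - Q_m,
Q_{m+1} = B P_m produce BRIG sequences with u_m = 0. -/
theorem brig_initial_values_with_zero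
    (A B : ℤ) (P Q : ℕ → ℤ) (u : ℕ → ℕ → ℤ)
    (hP2 : P 2 = A) (hQ2 : Q 2 = B)
    (hPrec : ∀ m : ℕ, 2 ≤ m → P (m + 1) = A * P m - Q m)
    (hQrec : ∀ m : ℕ, 2 ≤ m → Q (m + 1) = B * P m)
    (hu0 : ∀ m : ℕ, u m 0 = P m) (hu1 : ∀ m : ℕ, u m 1 = Q m)
    (hrec : ∀ m n : ℕ, u m (n + 2) = A * u m (n + 1) - B * u m n) :
    ∀ m : ℕ, 2 ≤ m → u m m = 0 := by
  have hsol (m : ℕ) : (lucasRecurrence A B).IsSolution (u m) :=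
    (lucasRecurrence_isSolution_iff A B (u m)).mpr (hrec m)
  have hshift (m : ℕ) (hm : 2 ≤ m) (n : ℕ) : u (m + 1) (n + 1) = B * u m n := by
    refine (lucasRecurrence A B).forall_succ_eq_mul_of_lt_order (hsol m) (hsol (m + 1)) B ?_ n
    intro k (hk : k < 2)
    interval_cases k
    · rw [hu1, hu0, hQrec m hm]
    · rw [hrec, hu1, hu0, hQrec m hm, hPrec m hm, hu1]
      ring
  intro m hm
  induction m, hm using Nat.le_induction with
  | base => rw [hrec, hu1, hu0, hP2, hQ2]; ring
  | succ m hm ih => rw [hshift m hm, ih, mul_zero]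
end

section
/- Let A, B, P, Q be integers with A > 0, A² > 4B, and set D = √(A² − 4B), α = (A+D)/2, β = (A−D)/2, a = (Q − Pβ)/D, b = (Q − Pα)/D. If Q² − APQ + BP² ≠ 0 then |a| ≥ 2 / (D(2|Q| + |P|(A+D))). -/
/-!
Since `α + β = A` and `α β = B`, the product `(Q - Pα)(Q - Pβ)` is the nonzero integer
`Q² - APQ + BP²`, so `|Q - Pα| |Q - Pβ| ≥ 1`. The trivial bound
`|Q - Pα| ≤ |Q| + |P| α = (2|Q| + |P|(A + D)) / 2` then forces
`|Q - Pβ| ≥ 2 / (2|Q| + |P|(A + D))`, and `a = (Q - Pβ) / D`.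
-/

theorem sub_mul_mul_sub_mul_of_vieta {R : Type*} [CommRing R] {A B α β : R}
    (hsum : α + β = A) (hprod : α * β = B) (P Q : R) :
    (Q - P * α) * (Q - P * β) = Q ^ 2 - A * P * Q + B * P ^ 2 := by
  rw [← hsum, ← hprod]
  ring

theorem inv_le_of_one_le_mul_of_le {K : Type*} [Field K] [LinearOrder K] [IsStrictOrderedRing K]
    {x y c : K} (hy : 0 ≤ y) (hxy : 1 ≤ x * y) (hxc : x ≤ c) : c⁻¹ ≤ y := by
  have hcy : 1 ≤ c * y := hxy.trans (mul_le_mul_of_nonneg_right hxc hy)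
  have hc : 0 < c := pos_of_mul_pos_left (zero_lt_one.trans_le hcy) hy
  rwa [inv_le_iff_one_le_mul₀' hc]

theorem abs_sub_mul_le_of_nonneg {K : Type*} [Ring K] [LinearOrder K] [IsStrictOrderedRing K]
    (P Q α : K) (hα : 0 ≤ α) : |Q - P * α| ≤ |Q| + |P| * α := by
  calc |Q - P * α| ≤ |Q| + |P * α| := abs_sub _ _
    _ = |Q| + |P| * α := by rw [abs_mul, abs_of_nonneg hα]

theorem lower_bound_coefficient_a_general
    (A B P Q : ℤ) (hA : 0 < A) (hAB : 4 * B < A ^ 2)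
    (D β a : ℝ)
    (hD : D = Real.sqrt ((A : ℝ) ^ 2 - 4 * B))
    (hβ : β = ((A : ℝ) - D) / 2)
    (ha : a = ((Q : ℝ) - P * β) / D)
    (hnz : Q ^ 2 - A * P * Q + B * P ^ 2 ≠ 0) :
    2 / (D * (2 * |(Q : ℝ)| + |(P : ℝ)| * ((A : ℝ) + D))) ≤ |a| := by
  have hdisc : (0 : ℝ) < (A : ℝ) ^ 2 - 4 * B := by
    rw [sub_pos]; exact_mod_cast hAB
  have hDpos : 0 < D := hD ▸ Real.sqrt_pos.mpr hdisc
  have hDsq : D ^ 2 = (A : ℝ) ^ 2 - 4 * B := hD ▸ Real.sq_sqrt hdisc.le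
  set α : ℝ := ((A : ℝ) + D) / 2 with hαdef
  have hα : 0 ≤ α := by
    have : (0 : ℝ) < A := by exact_mod_cast hA
    positivity
  have hnorm : (1 : ℝ) ≤ |(Q : ℝ) - P * α| * |(Q : ℝ) - P * β| := by
    have hsum : α + β = A := by rw [hβ]; ring
    have hprod : α * β = B := by rw [hβ]; linear_combination (-1 / 4 : ℝ) * hDsq
    rw [← abs_mul, sub_mul_mul_sub_mul_of_vieta hsum hprod]
    exact_mod_cast Int.one_le_abs hnz
  have hβbound : 2 / (2 * |(Q : ℝ)| + |(P : ℝ)| * (A + D)) ≤ |(Q : ℝ) - P * β| := by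
    rw [← inv_div]
    refine inv_le_of_one_le_mul_of_le (abs_nonneg _) hnorm ?_
    calc |(Q : ℝ) - P * α| ≤ |(Q : ℝ)| + |(P : ℝ)| * α := abs_sub_mul_le_of_nonneg _ _ _ hα
      _ = (2 * |(Q : ℝ)| + |(P : ℝ)| * (A + D)) / 2 := by rw [hαdef]; ring
  rw [ha, abs_div, abs_of_pos hDpos, mul_comm, ← div_div]
  exact div_le_div_of_nonneg_right hβbound hDpos.le

/-- Lower bound for |a| in the real case. -/
theorem lower_bound_coefficient_a
    (A B P Q : ℤ) (hA : 0 < A) (hAB : 4 * B < A ^ 2)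
    (D α β a : ℝ)
    (hD : D = Real.sqrt ((A : ℝ) ^ 2 - 4 * B))
    (hα : α = ((A : ℝ) + D) / 2) (hβ : β = ((A : ℝ) - D) / 2)
    (ha : a = ((Q : ℝ) - P * β) / D)
    (hnz : Q ^ 2 - A * P * Q + B * P ^ 2 ≠ 0) :
    2 / (D * (2 * |(Q : ℝ)| + |(P : ℝ)| * ((A : ℝ) + D))) ≤ |a| :=
  lower_bound_coefficient_a_general A B P Q hA hAB D β a hD hβ ha hnz
end
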